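/- arXiv:gr-qc/0412132 — 6 statements merged into one kernel-verified Lean document; each statement's English description precedes it below -/
import Mathlib

section
/- Let a ∈ ℝ and let M₁, M₂ : ℝ × ℝ → ℝ be two mass functions. For all u, r, θ ∈ ℝ with ρ² = r² + a² cos²θ ≠ 0, the rotating metrics satisfy the Kerr–Schild relation g[M₁](u,r,θ) = g[M₂](u,r,θ) + 2Q ℓ ℓᵀ (componentwise equality of 4×4 matrices), where Q = −r (M₁(u,r) − M₂(u,r)) / ρ² and ℓ = (1, 0, 0, −a sin²θ) is the null covector, with ℓ ℓᵀ the outer product matrix. -/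
/-- The rotating metric `g[M]` in coordinates `(u, r, θ, φ)` for rotation
parameter `a` and mass function `M(u, r)`, as a symmetric 4×4 real matrix. -/
noncomputable def rotMetric (a : ℝ) (M : ℝ × ℝ → ℝ) (u r θ : ℝ) :
    Matrix (Fin 4) (Fin 4) ℝ :=
  let ρ2 := r ^ 2 + a ^ 2 * Real.cos θ ^ 2
  let Δ := r ^ 2 - 2 * r * M (u, r) + a ^ 2
  !![1 - 2 * r * M (u, r) / ρ2, 1, 0, 2 * a * r * M (u, r) * Real.sin θ ^ 2 / ρ2;
     1, 0, 0, -(a * Real.sin θ ^ 2);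
     0, 0, -ρ2, 0;
     2 * a * r * M (u, r) * Real.sin θ ^ 2 / ρ2, -(a * Real.sin θ ^ 2), 0,
       -(((r ^ 2 + a ^ 2) ^ 2 - Δ * a ^ 2 * Real.sin θ ^ 2) * Real.sin θ ^ 2 / ρ2)]

/-- The null covector `ℓ = (1, 0, 0, −a sin²θ)`. -/
noncomputable def nullCovector (a θ : ℝ) : Fin 4 → ℝ :=
  ![1, 0, 0, -(a * Real.sin θ ^ 2)]

/-- Kerr–Schild relation between the rotating metrics of any two mass functions:
`g[M₁] = g[M₂] + 2Q ℓ ℓᵀ` with `Q = −r (M₁(u,r) − M₂(u,r)) / ρ²`. -/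
theorem kerrSchild_general (a : ℝ) (M₁ M₂ : ℝ × ℝ → ℝ) :
    ∀ u r θ : ℝ, r ^ 2 + a ^ 2 * Real.cos θ ^ 2 ≠ 0 →
      rotMetric a M₁ u r θ =
        rotMetric a M₂ u r θ +
          (2 * (-(r * (M₁ (u, r) - M₂ (u, r))) / (r ^ 2 + a ^ 2 * Real.cos θ ^ 2))) •
            Matrix.vecMulVec (nullCovector a θ) (nullCovector a θ) := by
  intro u r θ hρ
  ext i j
  fin_cases i <;> fin_cases j <;>
    simp [rotMetric, nullCovector, Matrix.vecMulVec, Matrix.add_apply, Matrix.smul_apply,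
      smul_eq_mul] <;>
    field_simp <;> ring
end

section
/- Let a, Λ* ∈ ℝ and let M, e : ℝ → ℝ. For all u, θ ∈ ℝ and all r ≠ 0 with ρ² = r² + a² cos²θ ≠ 0, the rotating Vaidya–Bonnor–de Sitter metric g[M_VBdS] with M_VBdS(u,r) = M(u) − e(u)²/(2r) + Λ* r³/6 satisfies g[M_VBdS](u,r,θ) = g[M_dS](u,r,θ) + 2Q ℓ ℓᵀ, where M_dS(u,r) = Λ* r³/6 is the rotating de Sitter mass function, Q = −(r M(u) − e(u)²/2)/ρ², and ℓ = (1, 0, 0, −a sin²θ). -/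
/-- Kerr–Schild form of the rotating Vaidya–Bonnor–de Sitter metric on the
rotating de Sitter background: `g[M_VBdS] = g[M_dS] + 2Q ℓ ℓᵀ` with
`Q = −(r M(u) − e(u)²/2)/ρ²`. -/
theorem kerrSchild_VBdS_on_dS (a Λstar : ℝ) (M e : ℝ → ℝ) :
    ∀ u θ : ℝ, ∀ r : ℝ, r ≠ 0 → r ^ 2 + a ^ 2 * Real.cos θ ^ 2 ≠ 0 →
      rotMetric a (fun p => M p.1 - e p.1 ^ 2 / (2 * p.2) + Λstar * p.2 ^ 3 / 6) u r θ =
        rotMetric a (fun p => Λstar * p.2 ^ 3 / 6) u r θ +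
          (2 * (-(r * M u - e u ^ 2 / 2) / (r ^ 2 + a ^ 2 * Real.cos θ ^ 2))) •
            Matrix.vecMulVec (nullCovector a θ) (nullCovector a θ) := by
  intro u θ r hr hρ
  ext i j
  simp only [rotMetric, nullCovector, Matrix.add_apply, Matrix.smul_apply,
    Matrix.vecMulVec_apply, smul_eq_mul]
  fin_cases i <;> fin_cases j <;>
    simp [Matrix.cons_val_zero, Matrix.cons_val_one, Matrix.head_cons] <;>
    field_simp <;> ring
end

section
/- Let a, Λ* ∈ ℝ and let M, e : ℝ → ℝ. For all u, θ ∈ ℝ and all r ≠ 0 with ρ² = r² + a² cos²θ ≠ 0, the rotating Vaidya–Bonnor–de Sitter metric g[M_VBdS] with M_VBdS(u,r) = M(u) − e(u)²/(2r) + Λ* r³/6 satisfies g[M_VBdS](u,r,θ) = g[M_VB](u,r,θ) + 2Q ℓ ℓᵀ, where M_VB(u,r) = M(u) − e(u)²/(2r) is the rotating Vaidya–Bonnor mass function, Q = −Λ* r⁴/(6 ρ²), and ℓ = (1, 0, 0, −a sin²θ). -/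
/-- Kerr–Schild form of the rotating Vaidya–Bonnor–de Sitter metric on the
rotating Vaidya–Bonnor background: `g[M_VBdS] = g[M_VB] + 2Q ℓ ℓᵀ` with
`Q = −Λ* r⁴/(6 ρ²)`. -/
theorem kerrSchild_VBdS_on_VB (a Λstar : ℝ) (M e : ℝ → ℝ) :
    ∀ u θ : ℝ, ∀ r : ℝ, r ≠ 0 → r ^ 2 + a ^ 2 * Real.cos θ ^ 2 ≠ 0 →
      rotMetric a (fun p => M p.1 - e p.1 ^ 2 / (2 * p.2) + Λstar * p.2 ^ 3 / 6) u r θ =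
        rotMetric a (fun p => M p.1 - e p.1 ^ 2 / (2 * p.2)) u r θ +
          (2 * (-(Λstar * r ^ 4) / (6 * (r ^ 2 + a ^ 2 * Real.cos θ ^ 2)))) •
            Matrix.vecMulVec (nullCovector a θ) (nullCovector a θ) := by
  intro u θ r hr hρ
  ext i j
  fin_cases i <;> fin_cases j <;>
    simp [rotMetric, nullCovector, Matrix.vecMulVec_apply, Matrix.add_apply,
      Matrix.smul_apply, smul_eq_mul] <;>
    field_simp <;> ring
end

section
/- Let a, b ∈ ℝ and let M, e : ℝ → ℝ. For all u, θ ∈ ℝ and all r ≠ 0 with ρ² = r² + a² cos²θ ≠ 0, the rotating Vaidya–Bonnor–monopole metric g[M_VBm] with M_VBm(u,r) = M(u) + b r/2 − e(u)²/(2r) satisfies g[M_VBm](u,r,θ) = g[M_m](u,r,θ) + 2Q ℓ ℓᵀ, where M_m(u,r) = b r/2 is the rotating monopole mass function, Q = −(r M(u) − e(u)²/2)/ρ², and ℓ = (1, 0, 0, −a sin²θ). -/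
/-- Kerr–Schild form of the rotating Vaidya–Bonnor–monopole metric on the
rotating monopole background: `g[M_VBm] = g[M_m] + 2Q ℓ ℓᵀ` with
`Q = −(r M(u) − e(u)²/2)/ρ²`. -/
theorem kerrSchild_VBm_on_monopole (a b : ℝ) (M e : ℝ → ℝ) :
    ∀ u θ : ℝ, ∀ r : ℝ, r ≠ 0 → r ^ 2 + a ^ 2 * Real.cos θ ^ 2 ≠ 0 →
      rotMetric a (fun p => M p.1 + b * p.2 / 2 - e p.1 ^ 2 / (2 * p.2)) u r θ =
        rotMetric a (fun p => b * p.2 / 2) u r θ +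
          (2 * (-(r * M u - e u ^ 2 / 2) / (r ^ 2 + a ^ 2 * Real.cos θ ^ 2))) •
            Matrix.vecMulVec (nullCovector a θ) (nullCovector a θ) := by
  intro u θ r hr hρ
  ext i j
  simp only [rotMetric, nullCovector, Matrix.add_apply, Matrix.smul_apply,
    Matrix.vecMulVec_apply, smul_eq_mul]
  fin_cases i <;> fin_cases j <;>
    simp [Matrix.cons_val_zero, Matrix.cons_val_one, Matrix.head_cons] <;>
    field_simp <;> ring
end

section
/- Let a, m̃ ∈ ℝ and let M, e : ℝ → ℝ. For all u, θ ∈ ℝ and all r ≠ 0 with ρ² = r² + a² cos²θ ≠ 0, the rotating Vaidya–Bonnor–Kerr metric g[M_VBK] with M_VBK(u,r) = m̃ + M(u) − e(u)²/(2r) satisfies g[M_VBK](u,r,θ) = g[M_K](u,r,θ) + 2Q ℓ ℓᵀ, where M_K(u,r) = m̃ is the Kerr mass function, Q = −(r M(u) − e(u)²/2)/ρ², and ℓ = (1, 0, 0, −a sin²θ). -/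
/-- Kerr–Schild form of the rotating Vaidya–Bonnor–Kerr metric on the Kerr
background: `g[M_VBK] = g[M_K] + 2Q ℓ ℓᵀ` with `Q = −(r M(u) − e(u)²/2)/ρ²`. -/
theorem kerrSchild_VBK_on_Kerr (a mKerr : ℝ) (M e : ℝ → ℝ) :
    ∀ u θ : ℝ, ∀ r : ℝ, r ≠ 0 → r ^ 2 + a ^ 2 * Real.cos θ ^ 2 ≠ 0 →
      rotMetric a (fun p => mKerr + M p.1 - e p.1 ^ 2 / (2 * p.2)) u r θ =
        rotMetric a (fun _ => mKerr) u r θ +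
          (2 * (-(r * M u - e u ^ 2 / 2) / (r ^ 2 + a ^ 2 * Real.cos θ ^ 2))) •
            Matrix.vecMulVec (nullCovector a θ) (nullCovector a θ) := by
  intro u θ r hr hρ
  ext i j
  fin_cases i <;> fin_cases j <;>
    simp [rotMetric, nullCovector, Matrix.vecMulVec_apply, Matrix.add_apply,
      Matrix.smul_apply, smul_eq_mul] <;>
    field_simp <;> ring
end

section
/- Let a, m̃ ∈ ℝ and let ℳ*, e : ℝ → ℝ. For all u, θ ∈ ℝ and all r ≠ 0 with ρ² = r² + a² cos²θ ≠ 0, the negative-mass-remnant metric g[M_NMK] with M_NMK(u,r) = m̃ − ℳ*(u) − e(u)²/(2r) satisfies g[M_NMK](u,r,θ) = g[M_K](u,r,θ) + 2Q ℓ ℓᵀ, where M_K(u,r) = m̃ is the Kerr mass function, Q = (r ℳ*(u) + e(u)²/2)/ρ², and ℓ = (1, 0, 0, −a sin²θ). -/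
/-- Kerr–Schild form of the negative-mass-remnant metric on the Kerr background:
`g[M_NMK] = g[M_K] + 2Q ℓ ℓᵀ` with `Q = (r ℳ*(u) + e(u)²/2)/ρ²`. -/
theorem kerrSchild_NMK_on_Kerr (a mKerr : ℝ) (Mstar e : ℝ → ℝ) :
    ∀ u θ : ℝ, ∀ r : ℝ, r ≠ 0 → r ^ 2 + a ^ 2 * Real.cos θ ^ 2 ≠ 0 →
      rotMetric a (fun p => mKerr - Mstar p.1 - e p.1 ^ 2 / (2 * p.2)) u r θ =
        rotMetric a (fun _ => mKerr) u r θ +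
          (2 * ((r * Mstar u + e u ^ 2 / 2) / (r ^ 2 + a ^ 2 * Real.cos θ ^ 2))) •
            Matrix.vecMulVec (nullCovector a θ) (nullCovector a θ) := by

  intro u θ r hr hρ
  ext i j
  fin_cases i <;> fin_cases j <;>
    simp [rotMetric, nullCovector, Matrix.vecMulVec_apply, Matrix.smul_apply] <;>
    field_simp <;> ring
end
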